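/- Let n ≥ 3, let 1 < p < ∞ with 1/p + 1/q = 1, and let γ > −(n−1)(p−1). Let μ be a positive Borel measure on the upper half-space H with ∫_H y_n^p/(1+|y|)^γ dμ(y) < ∞ and ∫_H 1/(1+|y|)^{n−1} dμ(y) < ∞. For x ∈ H define h_1(x) = ∫_{{y ∈ H : 1 < |y| ≤ |x|/2}} G(x,y) dμ(y). Then h_1(x) = o( x_n |x|^{γ/p + (n−1)/q − n} ) as |x| → ∞, x ∈ H. -/

import Mathlib

open MeasureTheory Filter Metric Asymptotics ENNReal

/-- The last coordinate `x_n` of a point `x ∈ ℝⁿ`. -/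
noncomputable def lastCoord {n : ℕ} (x : EuclideanSpace ℝ (Fin n)) : ℝ :=
  if h : 0 < n then x ⟨n - 1, Nat.sub_lt h one_pos⟩ else 0

/-- The upper half-space `H = {x ∈ ℝⁿ : x_n > 0}`. -/
def upperHalfSpace (n : ℕ) : Set (EuclideanSpace ℝ (Fin n)) :=
  {x | 0 < lastCoord x}

/-- `ω_n = 2 π^{n/2} / Γ(n/2)`, the surface area of the unit sphere in ℝⁿ. -/
noncomputable def surfaceArea (n : ℕ) : ℝ :=
  2 * Real.pi ^ ((n : ℝ) / 2) / Real.Gamma ((n : ℝ) / 2)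

/-- The embedding `y' ↦ (y', 0)` of `ℝ^{n-1}` into `ℝⁿ`. -/
noncomputable def extendBdry {n : ℕ} (y' : EuclideanSpace ℝ (Fin (n - 1))) :
    EuclideanSpace ℝ (Fin n) :=
  (EuclideanSpace.equiv (Fin n) ℝ).symm
    (fun i => if h : (i : ℕ) < n - 1 then y' ⟨(i : ℕ), h⟩ else 0)

/-- The Poisson kernel `P(x, y') = 2 x_n / (ω_n |x - (y',0)|^n)` of the half-space. -/
noncomputable def halfSpacePoissonKernel (n : ℕ) (x : EuclideanSpace ℝ (Fin n))
    (y' : EuclideanSpace ℝ (Fin (n - 1))) : ℝ :=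
  2 * lastCoord x / (surfaceArea n * ‖x - extendBdry y'‖ ^ n)

/-- The Poisson integral `v(x) = ∫_{ℝ^{n-1}} P(x,y') f(y') dy'`. -/
noncomputable def poissonIntegral (n : ℕ) (f : EuclideanSpace ℝ (Fin (n - 1)) → ℝ)
    (x : EuclideanSpace ℝ (Fin n)) : ℝ :=
  ∫ y', halfSpacePoissonKernel n x y' * f y'

/-- The reflection `y* = (y', -y_n)` of `y` in the boundary hyperplane. -/
noncomputable def reflectPt {n : ℕ} (y : EuclideanSpace ℝ (Fin n)) :
    EuclideanSpace ℝ (Fin n) :=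
  (EuclideanSpace.equiv (Fin n) ℝ).symm
    (fun i => if (i : ℕ) = n - 1 then -(y i) else y i)

/-- The Green function `G(x,y) = r_n (|x - y*|^{2-n} - |x - y|^{2-n})` of the
half-space, where `r_n = 1/((n-2) ω_n)`. -/
noncomputable def greenFn (n : ℕ) (x y : EuclideanSpace ℝ (Fin n)) : ℝ :=
  (1 / (((n : ℝ) - 2) * surfaceArea n)) *
    (‖x - reflectPt y‖ ^ ((2 : ℝ) - n) - ‖x - y‖ ^ ((2 : ℝ) - n))

/-- The Green potential `h(x) = ∫_H G(x,y) dμ(y)`. -/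
noncomputable def greenPotential (n : ℕ) (μ : Measure (EuclideanSpace ℝ (Fin n)))
    (x : EuclideanSpace ℝ (Fin n)) : ℝ :=
  ∫ y in upperHalfSpace n, greenFn n x y ∂μ

/-- The maximal function of order `β` of a Borel measure `μ`:
`M(dμ)(x) = sup_{0<r<∞} μ(B(x,r))/r^β`. -/
noncomputable def maxFn {n : ℕ} (μ : Measure (EuclideanSpace ℝ (Fin n))) (β : ℝ)
    (x : EuclideanSpace ℝ (Fin n)) : ℝ≥0∞ :=
  ⨆ (r : ℝ) (_ : 0 < r), μ (Metric.ball x r) / ENNReal.ofReal (r ^ β)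

/-!
If `x ∈ H` and `‖y‖ ≤ ‖x‖ / 2`, then `‖x - y‖ ≥ ‖x‖ / 2`. Since `|x - y*|² = |x - y|² + 4 x_n y_n`,
the mean value bound for `t ↦ t^{2-n}` gives `|G(x,y)| ≤ 2 x_n y_n / (ω_n |x - y|ⁿ)`, hence
`|h₁(x)| ≲ x_n |x|^{-n} ∫_{|y| ≤ |x|} y_n dμ(y)`. It remains to show that this first moment is
`o(X^v)` with `v = γ/p + (n-1)/q > 0`. The part `|y| ≤ R` contributes a constant. On
`R < |y| ≤ X`, Hölder's inequality for `y_n = (y_n w^{-γ/p}) w^{γ/p}`, `w = 1 + |y|`, bounds the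
integral by `(∫_{|y|>R} y_n^p w^{-γ} dμ)^{1/p} (∫ w^{1-n} dμ)^{1/q} (1 + X)^v`, and the first factor
tends to `0` as `R → ∞`.
-/

open Topology

lemma surfaceArea_pos {n : ℕ} (hn : 0 < n) : 0 < surfaceArea n := by
  unfold surfaceArea
  have := Real.Gamma_pos_of_pos (by positivity : (0 : ℝ) < n / 2)
  positivity

section HalfSpace

variable {n : ℕ}

lemma lastCoord_eq (hn : 0 < n) (x : EuclideanSpace ℝ (Fin n)) :
    lastCoord x = x ⟨n - 1, by omega⟩ := by
  simp [lastCoord, hn]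

@[fun_prop]
lemma measurable_lastCoord : Measurable (lastCoord (n := n)) := by
  unfold lastCoord
  split_ifs <;> fun_prop

lemma measurableSet_upperHalfSpace : MeasurableSet (upperHalfSpace n) :=
  measurable_lastCoord measurableSet_Ioi

lemma lastCoord_le_norm (x : EuclideanSpace ℝ (Fin n)) : lastCoord x ≤ ‖x‖ := by
  unfold lastCoord
  split_ifs
  · exact (le_abs_self _).trans (PiLp.norm_apply_le x _)
  · exact norm_nonneg x

lemma reflectPt_eq (hn : 0 < n) (y : EuclideanSpace ℝ (Fin n)) :
    reflectPt y = y - (2 * lastCoord y) • EuclideanSpace.single ⟨n - 1, by omega⟩ 1 := by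
  ext i
  by_cases hi : (i : ℕ) = n - 1
  · have : i = ⟨n - 1, by omega⟩ := Fin.ext hi
    rw [this]
    simp only [reflectPt, PiLp.continuousLinearEquiv_symm_apply, ↓reduceIte, lastCoord_eq hn,
      PiLp.sub_apply, PiLp.smul_apply, PiLp.single_eq_same, smul_eq_mul, mul_one]
    ring
  · have : i ≠ ⟨n - 1, by omega⟩ := fun h => hi (by simp [h])
    simp [reflectPt, hi, this]

lemma norm_sub_reflectPt_sq (hn : 0 < n) (x y : EuclideanSpace ℝ (Fin n)) :
    ‖x - reflectPt y‖ ^ 2 = ‖x - y‖ ^ 2 + 4 * lastCoord x * lastCoord y := by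
  rw [reflectPt_eq hn, sub_sub_eq_add_sub, add_sub_right_comm, norm_add_sq_real, norm_smul,
    inner_smul_right, EuclideanSpace.inner_single_right]
  simp only [lastCoord_eq hn, Real.norm_eq_abs, mul_pow, sq_abs, PiLp.sub_apply,
    Real.ringHom_apply, one_mul, PiLp.norm_single, norm_one, mul_one]
  ring

lemma inv_pow_sub_inv_pow_le {t s : ℝ} (ht : 0 < t) (hts : t ≤ s) (m : ℕ) :
    (t ^ m)⁻¹ - (s ^ m)⁻¹ ≤ m * (s ^ 2 - t ^ 2) / (2 * t ^ (m + 2)) := by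
  have hs : 0 < s := ht.trans_le hts
  rw [inv_sub_inv (by positivity) (by positivity), div_le_div_iff₀ (by positivity) (by positivity)]
  rcases m with _ | k
  · simp
  have hpow : s ^ (k + 1) - t ^ (k + 1) ≤ (s - t) * (k + 1 : ℕ) * s ^ k := by
    simpa [abs_of_nonneg (sub_nonneg.2 hts), abs_of_pos hs, abs_of_pos ht, max_eq_left hts]
      using (le_abs_self _).trans (abs_pow_sub_pow_le s t (k + 1))
  calc (s ^ (k + 1) - t ^ (k + 1)) * (2 * t ^ (k + 1 + 2))
      ≤ (s - t) * (k + 1 : ℕ) * s ^ k * (2 * t ^ (k + 1 + 2)) := by gcongr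
    _ = (k + 1 : ℕ) * (s - t) * (2 * t ^ 2) * (t ^ (k + 1) * s ^ k) := by ring
    _ ≤ (k + 1 : ℕ) * (s - t) * ((s + t) * s) * (t ^ (k + 1) * s ^ k) := by
        gcongr (k + 1 : ℕ) * (s - t) * ?_ * _
        nlinarith
    _ = (k + 1 : ℕ) * (s ^ 2 - t ^ 2) * (t ^ (k + 1) * s ^ (k + 1)) := by ring

lemma abs_greenFn_le (hn : 3 ≤ n) {x y : EuclideanSpace ℝ (Fin n)}
    (hx : x ∈ upperHalfSpace n) (hy : y ∈ upperHalfSpace n) (hxy : x ≠ y) :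
    |greenFn n x y| ≤ 2 / surfaceArea n * (lastCoord x * lastCoord y) / ‖x - y‖ ^ n := by
  obtain ⟨m, rfl⟩ : ∃ m, n = m + 2 := ⟨n - 2, by omega⟩
  have hx : 0 < lastCoord x := hx
  have hy : 0 < lastCoord y := hy
  have hm : (0 : ℝ) < m := by norm_cast; omega
  have hω := surfaceArea_pos (n := m + 2) (by omega)
  set t := ‖x - y‖
  set s := ‖x - reflectPt y‖
  have ht : 0 < t := norm_pos_iff.2 (sub_ne_zero.2 hxy)
  have hs2 : s ^ 2 = t ^ 2 + 4 * lastCoord x * lastCoord y :=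
    norm_sub_reflectPt_sq (by omega) x y
  have hts : t ≤ s := (sq_le_sq₀ ht.le (norm_nonneg _)).1 (by nlinarith)
  have hG : greenFn (m + 2) x y = 1 / (m * surfaceArea (m + 2)) * ((s ^ m)⁻¹ - (t ^ m)⁻¹) := by
    have hexp : (2 : ℝ) - (m + 2 : ℕ) = -(m : ℝ) := by push_cast; ring
    simp only [greenFn, hexp, Real.rpow_neg (norm_nonneg _), Real.rpow_natCast]
    push_cast
    ring
  have hst : (s ^ m)⁻¹ ≤ (t ^ m)⁻¹ := inv_anti₀ (by positivity) (by gcongr)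
  rw [hG, abs_mul, abs_of_pos (by positivity), abs_sub_comm, abs_of_nonneg (sub_nonneg.2 hst)]
  calc 1 / (m * surfaceArea (m + 2)) * ((t ^ m)⁻¹ - (s ^ m)⁻¹)
      ≤ 1 / (m * surfaceArea (m + 2)) * (m * (s ^ 2 - t ^ 2) / (2 * t ^ (m + 2))) := by
        gcongr
        exact inv_pow_sub_inv_pow_le ht hts m
    _ = 2 / surfaceArea (m + 2) * (lastCoord x * lastCoord y) / t ^ (m + 2) := by
        rw [hs2]
        field_simp
        ring

lemma norm_setIntegral_greenFn_le (hn : 3 ≤ n) (μ : Measure (EuclideanSpace ℝ (Fin n)))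
    {x : EuclideanSpace ℝ (Fin n)} (hx : x ∈ upperHalfSpace n)
    {S : Set (EuclideanSpace ℝ (Fin n))} (hS : S ⊆ {y ∈ upperHalfSpace n | ‖y‖ ≤ ‖x‖ / 2})
    (hfin : ∫⁻ y in {y | ‖y‖ ≤ ‖x‖}, ENNReal.ofReal (lastCoord y) ∂μ.restrict (upperHalfSpace n)
      ≠ ⊤) :
    ‖∫ y in S, greenFn n x y ∂μ‖ ≤ 2 ^ (n + 1) / surfaceArea n * (lastCoord x / ‖x‖ ^ n) *
      (∫⁻ y in {y | ‖y‖ ≤ ‖x‖}, ENNReal.ofReal (lastCoord y)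
        ∂μ.restrict (upperHalfSpace n)).toReal := by
  set c := 2 ^ (n + 1) / surfaceArea n * (lastCoord x / ‖x‖ ^ n)
  have hxn : 0 < lastCoord x := hx
  have hX : 0 < ‖x‖ := hxn.trans_le (lastCoord_le_norm x)
  have hc : 0 ≤ c := by have := surfaceArea_pos (n := n) (by omega); positivity
  have hpt : ∀ y ∈ S, ‖greenFn n x y‖ ≤ c * lastCoord y := by
    intro y hy
    obtain ⟨hyH, hyx⟩ := hS hy
    have hxy : ‖x‖ / 2 ≤ ‖x - y‖ := by linarith [norm_sub_norm_le x y]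
    have hne : x ≠ y := sub_ne_zero.1 (norm_pos_iff.1 (by linarith))
    have hyn : 0 < lastCoord y := hyH
    have := surfaceArea_pos (n := n) (by omega)
    calc ‖greenFn n x y‖ ≤ 2 / surfaceArea n * (lastCoord x * lastCoord y) / ‖x - y‖ ^ n :=
          abs_greenFn_le hn hx hyH hne
      _ ≤ 2 / surfaceArea n * (lastCoord x * lastCoord y) / (‖x‖ / 2) ^ n := by gcongr
      _ = c * lastCoord y := by simp only [c, div_pow]; field_simp; ring
  have hS' : S ⊆ {y | ‖y‖ ≤ ‖x‖} ∩ upperHalfSpace n :=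
    fun y hy => ⟨(hS hy).2.trans (by linarith), (hS hy).1⟩
  calc ‖∫ y in S, greenFn n x y ∂μ‖
      ≤ (∫⁻ y in S, ENNReal.ofReal ‖greenFn n x y‖ ∂μ).toReal :=
        norm_integral_le_lintegral_norm _
    _ ≤ (ENNReal.ofReal c * ∫⁻ y in {y | ‖y‖ ≤ ‖x‖}, ENNReal.ofReal (lastCoord y)
          ∂μ.restrict (upperHalfSpace n)).toReal := by
        gcongr
        · exact ENNReal.mul_ne_top ENNReal.ofReal_ne_top hfin
        rw [← lintegral_const_mul _ measurable_lastCoord.ennreal_ofReal,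
          Measure.restrict_restrict (measurableSet_le measurable_norm measurable_const)]
        calc ∫⁻ y in S, ENNReal.ofReal ‖greenFn n x y‖ ∂μ
            ≤ ∫⁻ y in S, ENNReal.ofReal c * ENNReal.ofReal (lastCoord y) ∂μ :=
              setLIntegral_mono (by fun_prop) fun y hy => by
                rw [← ENNReal.ofReal_mul hc]; exact ENNReal.ofReal_le_ofReal (hpt y hy)
          _ ≤ _ := lintegral_mono_set hS'
    _ = c * (∫⁻ y in {y | ‖y‖ ≤ ‖x‖}, ENNReal.ofReal (lastCoord y)
          ∂μ.restrict (upperHalfSpace n)).toReal := by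
        rw [ENNReal.toReal_mul, ENNReal.toReal_ofReal hc]

end HalfSpace

lemma Asymptotics.isLittleO_of_forall_le_add_mul {α : Type*} {l : Filter α} {g h : α → ℝ}
    (hh : Tendsto h l atTop) (hg : ∀ ε > 0, ∃ C, ∀ᶠ x in l, ‖g x‖ ≤ C + ε * h x) :
    g =o[l] h := by
  refine isLittleO_iff.2 fun ε hε => ?_
  obtain ⟨C, hC⟩ := hg (ε / 2) (by positivity)
  filter_upwards [hC, hh.eventually_ge_atTop (2 * C / ε), hh.eventually_ge_atTop 0]
    with x hx hCx h0
  rw [Real.norm_of_nonneg h0]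
  rw [div_le_iff₀' hε] at hCx
  linarith

section Moments

variable {E : Type*} [NormedAddCommGroup E] [MeasurableSpace E] [OpensMeasurableSpace E]
  {ν : Measure E}

lemma tendsto_setLIntegral_norm_gt {F : E → ℝ≥0∞} (hF : AEMeasurable F ν)
    (hfin : ∫⁻ y, F y ∂ν ≠ ⊤) :
    Tendsto (fun R : ℝ => ∫⁻ y in {y | R < ‖y‖}, F y ∂ν) atTop (𝓝 0) := by
  have hmeas (R : ℝ) : MeasurableSet {y : E | R < ‖y‖} :=
    measurableSet_lt measurable_const measurable_norm
  simp_rw [← lintegral_indicator (hmeas _)]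
  have hlim : ∀ y, Tendsto (fun R : ℝ => {y : E | R < ‖y‖}.indicator F y) atTop (𝓝 0) := by
    intro y
    refine tendsto_const_nhds.congr' ?_
    filter_upwards [eventually_ge_atTop ‖y‖] with R hR
    simp [hR.not_gt]
  simpa using tendsto_lintegral_filter_of_dominated_convergence' F
    (.of_forall fun R => hF.indicator (hmeas R))
    (.of_forall fun R => ae_of_all _ fun y => Set.indicator_le_self _ _ y) hfin (ae_of_all _ hlim)

lemma setLIntegral_norm_le_le {f : E → ℝ} (hf : ∀ y, f y ≤ ‖y‖) {a : ℝ} (ha : 0 ≤ a) (R : ℝ) :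
    ∫⁻ y in {y | ‖y‖ ≤ R}, ENNReal.ofReal (f y) ∂ν ≤
      ENNReal.ofReal (R * (1 + R) ^ a) * ∫⁻ y, ENNReal.ofReal (1 / (1 + ‖y‖) ^ a) ∂ν := by
  have hpt : ∀ y ∈ {y : E | ‖y‖ ≤ R}, ENNReal.ofReal (f y) ≤
      ENNReal.ofReal (R * (1 + R) ^ a) * ENNReal.ofReal (1 / (1 + ‖y‖) ^ a) := by
    intro y (hy : ‖y‖ ≤ R)
    have hR : 0 ≤ R := (norm_nonneg y).trans hy
    have hw : 0 < (1 + ‖y‖) ^ a := by positivity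
    rw [← ENNReal.ofReal_mul (mul_nonneg hR (Real.rpow_nonneg (by linarith) _))]
    refine ENNReal.ofReal_le_ofReal ?_
    calc f y ≤ R * 1 := by linarith [hf y]
      _ ≤ R * ((1 + R) ^ a / (1 + ‖y‖) ^ a) := by
          gcongr
          rw [one_le_div hw]
          gcongr
      _ = R * (1 + R) ^ a * (1 / (1 + ‖y‖) ^ a) := by ring
  calc ∫⁻ y in {y | ‖y‖ ≤ R}, ENNReal.ofReal (f y) ∂ν
      ≤ ∫⁻ y in {y | ‖y‖ ≤ R},
          ENNReal.ofReal (R * (1 + R) ^ a) * ENNReal.ofReal (1 / (1 + ‖y‖) ^ a) ∂ν :=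
        setLIntegral_mono (by fun_prop) hpt
    _ ≤ ∫⁻ y, ENNReal.ofReal (R * (1 + R) ^ a) * ENNReal.ofReal (1 / (1 + ‖y‖) ^ a) ∂ν :=
        setLIntegral_le_lintegral _ _
    _ = _ := lintegral_const_mul _ (by fun_prop)

lemma setLIntegral_norm_mem_Ioc_le {f : E → ℝ} (hf : Measurable f) (hf0 : ∀ᵐ y ∂ν, 0 ≤ f y)
    {p q : ℝ} (hpq : p.HolderConjugate q) {γ a : ℝ} (hv : 0 ≤ γ / p + a / q) {X : ℝ} (hX : 0 ≤ X)
    (R : ℝ) :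
    ∫⁻ y in {y | R < ‖y‖ ∧ ‖y‖ ≤ X}, ENNReal.ofReal (f y) ∂ν ≤
      (∫⁻ y in {y | R < ‖y‖}, ENNReal.ofReal (f y ^ p / (1 + ‖y‖) ^ γ) ∂ν) ^ (1 / p) *
        (ENNReal.ofReal ((1 + X) ^ (γ / p + a / q)) *
          (∫⁻ y, ENNReal.ofReal (1 / (1 + ‖y‖) ^ a) ∂ν) ^ (1 / q)) := by
  set v := γ / p + a / q
  set T := {y : E | R < ‖y‖ ∧ ‖y‖ ≤ X}
  have hw (y : E) : 0 < 1 + ‖y‖ := by positivity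
  have hsplit (y : E) : ENNReal.ofReal (f y) =
      ENNReal.ofReal (f y / (1 + ‖y‖) ^ (γ / p)) * ENNReal.ofReal ((1 + ‖y‖) ^ (γ / p)) := by
    rw [← ENNReal.ofReal_mul' (by positivity), div_mul_cancel₀ _ (by positivity)]
  have hfirst : ∀ᵐ y ∂ν, ENNReal.ofReal (f y / (1 + ‖y‖) ^ (γ / p)) ^ p =
      ENNReal.ofReal (f y ^ p / (1 + ‖y‖) ^ γ) := by
    filter_upwards [hf0] with y hy
    rw [ENNReal.ofReal_rpow_of_nonneg (by positivity) hpq.nonneg,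
      Real.div_rpow hy (by positivity), ← Real.rpow_mul (hw y).le, div_mul_cancel₀ _ hpq.ne_zero]
  have hsecond : ∀ y ∈ T, ENNReal.ofReal ((1 + ‖y‖) ^ (γ / p)) ^ q ≤
      ENNReal.ofReal ((1 + X) ^ (q * v)) * ENNReal.ofReal (1 / (1 + ‖y‖) ^ a) := by
    intro y hy
    have hexp : γ / p * q = q * v - a := by
      simp only [v]; field_simp [hpq.ne_zero, hpq.symm.ne_zero]; ring
    rw [ENNReal.ofReal_rpow_of_nonneg (by positivity) hpq.symm.nonneg, ← Real.rpow_mul (hw y).le,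
      hexp, Real.rpow_sub (hw y), ← ENNReal.ofReal_mul (by positivity)]
    refine ENNReal.ofReal_le_ofReal ?_
    rw [mul_one_div]
    gcongr
    · exact mul_nonneg hpq.symm.nonneg hv
    · exact hy.2
  calc ∫⁻ y in T, ENNReal.ofReal (f y) ∂ν
      = ∫⁻ y in T, ((fun y : E => ENNReal.ofReal (f y / (1 + ‖y‖) ^ (γ / p))) *
          fun y : E => ENNReal.ofReal ((1 + ‖y‖) ^ (γ / p))) y ∂ν := by
        simp only [Pi.mul_apply, ← hsplit]
    _ ≤ (∫⁻ y in T, ENNReal.ofReal (f y / (1 + ‖y‖) ^ (γ / p)) ^ p ∂ν) ^ (1 / p) *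
          (∫⁻ y in T, ENNReal.ofReal ((1 + ‖y‖) ^ (γ / p)) ^ q ∂ν) ^ (1 / q) :=
        ENNReal.lintegral_mul_le_Lp_mul_Lq _ hpq (by fun_prop) (by fun_prop)
    _ ≤ (∫⁻ y in {y | R < ‖y‖}, ENNReal.ofReal (f y ^ p / (1 + ‖y‖) ^ γ) ∂ν) ^ (1 / p) *
          (ENNReal.ofReal ((1 + X) ^ (q * v)) *
            ∫⁻ y, ENNReal.ofReal (1 / (1 + ‖y‖) ^ a) ∂ν) ^ (1 / q) := by
        refine mul_le_mul' (ENNReal.rpow_le_rpow ?_ (one_div_pos.2 hpq.pos).le)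
          (ENNReal.rpow_le_rpow ?_ (one_div_pos.2 hpq.symm.pos).le)
        · rw [lintegral_congr_ae (ae_restrict_of_ae hfirst)]
          exact lintegral_mono_set fun y hy => hy.1
        · calc ∫⁻ y in T, ENNReal.ofReal ((1 + ‖y‖) ^ (γ / p)) ^ q ∂ν
              ≤ ∫⁻ y in T, ENNReal.ofReal ((1 + X) ^ (q * v)) *
                  ENNReal.ofReal (1 / (1 + ‖y‖) ^ a) ∂ν := setLIntegral_mono (by fun_prop) hsecond
            _ ≤ ∫⁻ y, ENNReal.ofReal ((1 + X) ^ (q * v)) *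
                  ENNReal.ofReal (1 / (1 + ‖y‖) ^ a) ∂ν := setLIntegral_le_lintegral _ _
            _ = _ := lintegral_const_mul _ (by fun_prop)
    _ = _ := by
        rw [ENNReal.mul_rpow_of_nonneg _ _ (one_div_pos.2 hpq.symm.pos).le,
          ENNReal.ofReal_rpow_of_nonneg (by positivity) (one_div_pos.2 hpq.symm.pos).le,
          ← Real.rpow_mul (by positivity), mul_comm q, mul_assoc,
          mul_one_div_cancel hpq.symm.ne_zero, mul_one]

theorem isLittleO_setLIntegral_norm_le {f : E → ℝ} (hf : Measurable f)
    (hf0 : ∀ᵐ y ∂ν, 0 ≤ f y) (hf_le : ∀ y, f y ≤ ‖y‖) {p q : ℝ} (hpq : p.HolderConjugate q)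
    {γ a : ℝ} (ha : 0 ≤ a) (hv : 0 < γ / p + a / q)
    (hfγ : ∫⁻ y, ENNReal.ofReal (f y ^ p / (1 + ‖y‖) ^ γ) ∂ν ≠ ⊤)
    (ha_fin : ∫⁻ y, ENNReal.ofReal (1 / (1 + ‖y‖) ^ a) ∂ν ≠ ⊤) :
    (fun X => (∫⁻ y in {y | ‖y‖ ≤ X}, ENNReal.ofReal (f y) ∂ν).toReal) =o[atTop]
      fun X => (1 + X) ^ (γ / p + a / q) := by
  set v := γ / p + a / q
  set B := ∫⁻ y, ENNReal.ofReal (1 / (1 + ‖y‖) ^ a) ∂ν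
  set tail := fun R : ℝ => ∫⁻ y in {y | R < ‖y‖}, ENNReal.ofReal (f y ^ p / (1 + ‖y‖) ^ γ) ∂ν
  refine isLittleO_of_forall_le_add_mul
    ((tendsto_rpow_atTop hv).comp (tendsto_atTop_add_const_left _ 1 tendsto_id)) fun ε hε => ?_
  have htail : Tendsto (fun R => tail R ^ (1 / p) * B ^ (1 / q)) atTop (𝓝 0) := by
    have h := tendsto_setLIntegral_norm_gt (by fun_prop) hfγ
    have h' := ((ENNReal.continuous_rpow_const (y := 1 / p)).tendsto 0).comp h
    rw [ENNReal.zero_rpow_of_pos (one_div_pos.2 hpq.pos)] at h'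
    simpa using ENNReal.Tendsto.mul_const h' (.inr (ENNReal.rpow_ne_top_of_nonneg
      (one_div_pos.2 hpq.symm.pos).le ha_fin))
  obtain ⟨R, hR, hR0⟩ :=
    ((htail.eventually (gt_mem_nhds (ENNReal.ofReal_pos.2 hε))).and (eventually_ge_atTop 0)).exists
  refine ⟨R * (1 + R) ^ a * B.toReal, ?_⟩
  filter_upwards [eventually_ge_atTop 0] with X hX
  have hcover : {y : E | ‖y‖ ≤ X} ⊆ {y | ‖y‖ ≤ R} ∪ {y | R < ‖y‖ ∧ ‖y‖ ≤ X} := by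
    intro y (hy : ‖y‖ ≤ X)
    rcases le_or_gt ‖y‖ R with h | h
    exacts [.inl h, .inr ⟨h, hy⟩]
  have hbound : ∫⁻ y in {y | ‖y‖ ≤ X}, ENNReal.ofReal (f y) ∂ν ≤
      ENNReal.ofReal (R * (1 + R) ^ a * B.toReal + ε * (1 + X) ^ v) := by
    calc ∫⁻ y in {y | ‖y‖ ≤ X}, ENNReal.ofReal (f y) ∂ν
        ≤ ∫⁻ y in {y | ‖y‖ ≤ R}, ENNReal.ofReal (f y) ∂ν +
            ∫⁻ y in {y | R < ‖y‖ ∧ ‖y‖ ≤ X}, ENNReal.ofReal (f y) ∂ν :=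
          (lintegral_mono_set hcover).trans (lintegral_union_le _ _ _)
      _ ≤ ENNReal.ofReal (R * (1 + R) ^ a) * B +
            tail R ^ (1 / p) * (ENNReal.ofReal ((1 + X) ^ v) * B ^ (1 / q)) :=
          add_le_add (setLIntegral_norm_le_le hf_le ha R)
            (setLIntegral_norm_mem_Ioc_le hf hf0 hpq hv.le hX R)
      _ = ENNReal.ofReal (R * (1 + R) ^ a) * B +
            tail R ^ (1 / p) * B ^ (1 / q) * ENNReal.ofReal ((1 + X) ^ v) := by ring
      _ ≤ ENNReal.ofReal (R * (1 + R) ^ a) * ENNReal.ofReal B.toReal +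
            ENNReal.ofReal ε * ENNReal.ofReal ((1 + X) ^ v) := by
          rw [ENNReal.ofReal_toReal ha_fin]
          gcongr
      _ = _ := by
          rw [← ENNReal.ofReal_mul (by positivity), ← ENNReal.ofReal_mul hε.le,
            ← ENNReal.ofReal_add (by positivity) (by positivity)]
  rw [Real.norm_of_nonneg ENNReal.toReal_nonneg]
  exact ENNReal.toReal_le_of_le_ofReal (by positivity) hbound

end Moments

lemma isBigO_one_add_rpow {v : ℝ} (hv : 0 ≤ v) :
    (fun X : ℝ => (1 + X) ^ v) =O[atTop] fun X => X ^ v :=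
  (((isLittleO_const_id_atTop 1).isBigO.add (isBigO_refl _ _)).rpow hv
    (eventually_ge_atTop 0)).congr_left fun _ => rfl

/-- Estimate for `h₁(x) = ∫_{1<|y|≤|x|/2} G(x,y) dμ(y)`:
`h₁(x) = o(x_n |x|^{γ/p+(n-1)/q-n})` as `|x| → ∞`, `x ∈ H`. -/
theorem stmt14 (n : ℕ) (hn : 3 ≤ n) (p q γ : ℝ) (hp : 1 < p)
    (hpq : 1 / p + 1 / q = 1) (hγ : -((n : ℝ) - 1) * (p - 1) < γ)
    (μ : Measure (EuclideanSpace ℝ (Fin n)))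
    (hμ1 : ∫⁻ y in upperHalfSpace n,
        ENNReal.ofReal (lastCoord y ^ p / (1 + ‖y‖) ^ γ) ∂μ < ⊤)
    (hμ2 : ∫⁻ y in upperHalfSpace n,
        ENNReal.ofReal (1 / (1 + ‖y‖) ^ ((n : ℝ) - 1)) ∂μ < ⊤) :
    (fun x : EuclideanSpace ℝ (Fin n) =>
        ∫ y in {y ∈ upperHalfSpace n | 1 < ‖y‖ ∧ ‖y‖ ≤ ‖x‖ / 2}, greenFn n x y ∂μ)
      =o[comap (fun x => ‖x‖) atTop ⊓ 𝓟 (upperHalfSpace n)]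
      fun x => lastCoord x * ‖x‖ ^ (γ / p + ((n : ℝ) - 1) / q - n) := by
  set H := upperHalfSpace n
  set v := γ / p + ((n : ℝ) - 1) / q
  have hpq' : p.HolderConjugate q :=
    Real.holderConjugate_iff.2 ⟨hp, by simpa only [one_div] using hpq⟩
  have ha : (0 : ℝ) ≤ n - 1 := by
    have : (3 : ℝ) ≤ n := by exact_mod_cast hn
    linarith
  have hv : 0 < v := by
    have hv_eq : v = (γ + ((n : ℝ) - 1) * (p - 1)) / p := by
      simp only [v]
      rw [div_eq_mul_one_div _ q, show 1 / q = 1 - 1 / p by linarith]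
      field_simp [hpq'.ne_zero]
    rw [hv_eq]
    exact div_pos (by linarith) hpq'.pos
  set J := fun X : ℝ => ∫⁻ y in {y | ‖y‖ ≤ X}, ENNReal.ofReal (lastCoord y) ∂μ.restrict H
  have hJ : (fun X => (J X).toReal) =o[atTop] fun X => X ^ v :=
    (isLittleO_setLIntegral_norm_le measurable_lastCoord
      ((ae_restrict_mem measurableSet_upperHalfSpace).mono fun y hy => le_of_lt hy)
      lastCoord_le_norm hpq' ha hv
      hμ1.ne hμ2.ne).trans_isBigO (isBigO_one_add_rpow hv.le)
  have hJfin (X : ℝ) : J X ≠ ⊤ :=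
    ne_top_of_le_ne_top (ENNReal.mul_ne_top ENNReal.ofReal_ne_top hμ2.ne)
      (setLIntegral_norm_le_le lastCoord_le_norm ha X)
  have hnorm : Tendsto (fun x : EuclideanSpace ℝ (Fin n) => ‖x‖)
      (comap (fun x => ‖x‖) atTop ⊓ 𝓟 H) atTop := tendsto_comap.mono_left inf_le_left
  have hbound : ∀ᶠ x in comap (fun x => ‖x‖) atTop ⊓ 𝓟 H,
      ‖∫ y in {y ∈ H | 1 < ‖y‖ ∧ ‖y‖ ≤ ‖x‖ / 2}, greenFn n x y ∂μ‖ ≤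
        2 ^ (n + 1) / surfaceArea n * ‖lastCoord x / ‖x‖ ^ n * (J ‖x‖).toReal‖ :=
    eventually_inf_principal.2 (.of_forall fun x (hx : 0 < lastCoord x) => by
      refine (norm_setIntegral_greenFn_le hn μ hx (fun y hy => ⟨hy.1, hy.2.2⟩)
        (hJfin _)).trans_eq ?_
      rw [mul_assoc, Real.norm_of_nonneg
        (mul_nonneg (div_nonneg hx.le (by positivity)) ENNReal.toReal_nonneg)])
  refine (IsBigO.of_bound _ hbound).trans_isLittleO
    (((isBigO_refl (fun x => lastCoord x / ‖x‖ ^ n) _).mul_isLittleO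
      (hJ.comp_tendsto hnorm)).congr' .rfl ?_)
  filter_upwards [hnorm.eventually_gt_atTop 0] with x hx
  simp only [Function.comp, Real.rpow_sub hx, Real.rpow_natCast]
  ring
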